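/- arXiv:2508.04754 — 7 statements merged into one kernel-verified Lean document; each statement's English description precedes it below -/
import Mathlib

section
/- For integers n ≥ k ≥ 1, the Ward-Lah number W(n,k) = (n+k)!/k! · C(n-1, k-1) satisfies the alternating-sum identity W(n,k) = ∑_{m=1}^{k} (-1)^{m+k} · C(n+k, n+m) · C(n+m-1, m-1) · (n+m)!/m!. -/
/-!
Since `C(n+k, n+m) (n+m)!/m! = (n+k)!/k! · C(k, m)` and `C(n+m-1, m-1) = C(n-1+m, n)`, the sum is
`(n+k)!/k!` times `∑ₘ (-1)^(k-m) C(k, m) C(n-1+m, n)`, the `k`-th forward difference of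
`x ↦ C(x, n)` at `n - 1`. As `Δ C(x, j+1) = C(x, j)`, this difference is `C(n-1, n-k) = C(n-1, k-1)`.
-/

def wardLah (n k : ℕ) : ℚ :=
  if k = 0 then (if n = 0 then 1 else 0)
  else if n < k then 0
  else (Nat.factorial (n + k) : ℚ) / (Nat.factorial k) * (Nat.choose (n - 1) (k - 1))

open Finset Nat

theorem sum_range_neg_one_pow_mul_choose_mul_add_choose {R : Type*} [CommRing R] (k j N : ℕ) :
    ∑ m ∈ range (k + 1), (-1 : R) ^ (k - m) * k.choose m * (N + m).choose (k + j) =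
      N.choose j := by
  have h := fwdDiff_iter_eq_sum_shift 1 (fun x ↦ x.choose (k + j) : ℕ → ℤ) k N
  rw [fwdDiff_iter_choose] at h
  simpa using congrArg (Int.cast : ℤ → R) h.symm

theorem neg_one_pow_add_eq_pow_sub {R : Type*} [Monoid R] [HasDistribNeg R] {m k : ℕ}
    (hmk : m ≤ k) : (-1 : R) ^ (m + k) = (-1) ^ (k - m) := by
  obtain ⟨d, rfl⟩ := Nat.exists_eq_add_of_le hmk
  rw [Nat.add_sub_cancel_left, ← add_assoc, ← two_mul, pow_add, pow_mul, neg_one_sq, one_pow,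
    one_mul]

theorem add_choose_add_mul_factorial_div_factorial {K : Type*} [Field K] [CharZero K] {n k m : ℕ}
    (hmk : m ≤ k) :
    ((n + k).choose (n + m) : K) * ((n + m)! / m !) = (n + k)! / k ! * k.choose m := by
  rw [cast_choose K (by omega : n + m ≤ n + k), cast_choose K hmk,
    show n + k - (n + m) = k - m by omega]
  have := (n + m).factorial_ne_zero
  have := k.factorial_ne_zero
  field_simp

theorem wardLah_alternating_sum (n k : ℕ) (hk : 1 ≤ k) (hkn : k ≤ n) :
    wardLah n k =
      ∑ m ∈ Finset.Icc 1 k, (-1 : ℚ) ^ (m + k) * (Nat.choose (n + k) (n + m)) *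
        (Nat.choose (n + m - 1) (m - 1)) * (Nat.factorial (n + m) / Nat.factorial m) := by
  set f : ℕ → ℚ := fun m ↦ (-1) ^ (k - m) * k.choose m * (n - 1 + m).choose n
  have hterm : ∀ m ∈ Icc 1 k,
      (-1 : ℚ) ^ (m + k) * (Nat.choose (n + k) (n + m)) *
        (Nat.choose (n + m - 1) (m - 1)) * (Nat.factorial (n + m) / Nat.factorial m) =
      (n + k)! / k ! * f m := by
    intro m hm
    obtain ⟨hm1, hmk⟩ := mem_Icc.mp hm
    rw [neg_one_pow_add_eq_pow_sub hmk, choose_symm_of_eq_add (by omega : n + m - 1 = m - 1 + n),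
      show n + m - 1 = n - 1 + m by omega]
    linear_combination (-1 : ℚ) ^ (k - m) * ((n - 1 + m).choose n : ℚ) *
      add_choose_add_mul_factorial_div_factorial (K := ℚ) (n := n) hmk
  have hrange : ∑ m ∈ Icc 1 k, f m = ∑ m ∈ range (k + 1), f m := by
    refine sum_subset (fun m hm ↦ ?_) (fun m hm hm' ↦ ?_)
    · simp only [mem_Icc, mem_range] at hm ⊢; omega
    · have hm0 : m = 0 := by simp only [mem_range, mem_Icc] at hm hm'; omega
      simp [f, hm0, choose_eq_zero_of_lt (by omega : n - 1 < n)]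
  have hdiff := sum_range_neg_one_pow_mul_choose_mul_add_choose (R := ℚ) k (n - k) (n - 1)
  rw [Nat.add_sub_cancel' hkn] at hdiff
  rw [sum_congr rfl hterm, ← mul_sum, hrange, hdiff, wardLah, if_neg (by omega), if_neg (by omega),
    choose_symm_of_eq_add (by omega : n - 1 = k - 1 + (n - k))]
end

section
/- For integers n ≥ k ≥ 1 with k ≥ 2, the Ward-Lah numbers satisfy the triangular recurrence W(n,k) = ((n+k)(n-1)/n) · ( W(n-1,k) + ((n+k-1)/(k-1)) · W(n-1,k-1) ). -/
/-! For `n, k ≥ 1` the definition is uniformly `W(n,k) = (n+k)!/k! · C(n-1,k-1)`, the binomial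
vanishing when `n < k`. Clearing the factorials, the recurrence reduces to the absorption
identities `(k+1)·C(n+1,k+1) = (n+1)·C(n,k)` and `(k+1)·C(n,k+1) = (n-k)·C(n,k)`. For `n ≤ 1`
both sides vanish, the right one through the factor `(n-1)/n` (division by zero in `ℚ` at `n = 0`). -/

open Nat

namespace Nat

variable {K : Type*} [Field K] [CharZero K]

theorem cast_succ_choose_succ (n k : ℕ) :
    ((n + 1).choose (k + 1) : K) = (n + 1) / (k + 1) * n.choose k := by
  have absorb := congrArg (Nat.cast : ℕ → K) (add_one_mul_choose_eq n k)
  push_cast at absorb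
  field_simp
  linear_combination -absorb

theorem cast_choose_succ_right (n k : ℕ) :
    (n.choose (k + 1) : K) = (n - k) / (k + 1) * n.choose k := by
  have pascal := congrArg (Nat.cast : ℕ → K) (choose_succ_succ' n k)
  push_cast at pascal
  rw [cast_succ_choose_succ] at pascal
  field_simp at pascal ⊢
  linear_combination -pascal

end Nat

theorem wardLah_succ_succ (m j : ℕ) :
    wardLah (m + 1) (j + 1) = (m + j + 2)! / (j + 1)! * m.choose j := by
  rw [wardLah, if_neg j.succ_ne_zero]
  split_ifs
  · rw [choose_eq_zero_of_lt (by omega), cast_zero, mul_zero]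
  · rw [show m + 1 + (j + 1) = m + j + 2 by ring, add_tsub_cancel_right, add_tsub_cancel_right]

theorem wardLah_triangular_rec_general (n k : ℕ) (hk : 2 ≤ k) :
    wardLah n k =
      ((n : ℚ) + k) * ((n : ℚ) - 1) / n *
        (wardLah (n - 1) k + ((n : ℚ) + k - 1) / ((k : ℚ) - 1) * wardLah (n - 1) (k - 1)) := by
  obtain ⟨j, rfl⟩ : ∃ j, k = j + 2 := ⟨k - 2, by omega⟩
  rcases n with _ | _ | p
  · simp [wardLah]
  · simp [wardLah]
  simp only [Nat.add_one_sub_one, wardLah_succ_succ]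
  rw [show p + 1 + (j + 1) + 2 = p + j + 2 + 1 + 1 by ring,
    show p + (j + 1) + 2 = p + j + 2 + 1 by ring, factorial_succ (p + j + 2 + 1),
    factorial_succ (p + j + 2), factorial_succ (j + 1),
    cast_succ_choose_succ p j, cast_choose_succ_right p j]
  push_cast
  rw [show (j : ℚ) + 2 - 1 = j + 1 by ring]
  field_simp
  ring

theorem wardLah_triangular_rec (n k : ℕ) (hk : 2 ≤ k) (hkn : k ≤ n) :
    wardLah n k =
      ((n : ℚ) + k) * ((n : ℚ) - 1) / n *
        (wardLah (n - 1) k + ((n : ℚ) + k - 1) / ((k : ℚ) - 1) * wardLah (n - 1) (k - 1)) :=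
  wardLah_triangular_rec_general n k hk
end

section
/- For positive integers n, k, m with n ≥ k ≥ 1 and n - m ≥ 1, the Ward-Lah numbers satisfy the horizontal recurrence W(n,k) = ((n+k)!/k!) · ∑_{j=0}^{m} ((k-j)!/(n-m+k-j)!) · C(m,j) · W(n-m, k-j). -/
open Finset Polynomial

theorem Finset.sum_range_mul_eq_sum_antidiagonal {R : Type*} [Semiring R] {f g : ℕ → R}
    {m : ℕ} (hf : ∀ j, m < j → f j = 0) (hg : g 0 = 0) (k : ℕ) :
    ∑ j ∈ range (m + 1), f j * g (k - j) = ∑ ij ∈ antidiagonal k, f ij.1 * g ij.2 := by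
  rw [Nat.sum_antidiagonal_eq_sum_range_succ (fun i j => f i * g j),
    sum_subset (range_subset_range.2 (Nat.le_add_right (m + 1) k)),
    sum_subset (range_subset_range.2 (by omega : k + 1 ≤ m + 1 + k))]
  · intro j _ hj
    rw [mem_range, not_lt] at hj
    rw [Nat.sub_eq_zero_of_le (by omega), hg, mul_zero]
  · intro j _ hj
    rw [mem_range, not_lt] at hj
    rw [hf j (by omega), zero_mul]

noncomputable def wardLahRowPoly (n : ℕ) : ℚ[X] := X * (X + 1) ^ (n - 1)

theorem wardLahRowPoly_eq_mul {n m : ℕ} (h : m < n) :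
    wardLahRowPoly n = (X + 1) ^ m * wardLahRowPoly (n - m) := by
  unfold wardLahRowPoly
  rw [show n - 1 = m + (n - m - 1) by omega, pow_add]
  ring

theorem wardLah_zero_right {n : ℕ} (hn : n ≠ 0) : wardLah n 0 = 0 := by
  simp [wardLah, hn]

theorem wardLahRowPoly_coeff {n : ℕ} (hn : n ≠ 0) (k : ℕ) :
    (wardLahRowPoly n).coeff k = (k.factorial : ℚ) / (n + k).factorial * wardLah n k := by
  rcases k with _ | k
  · simp [wardLahRowPoly, wardLah_zero_right hn]
  · rw [wardLahRowPoly, coeff_X_mul, coeff_X_add_one_pow, wardLah, if_neg k.succ_ne_zero]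
    split_ifs with hnk
    · simp [Nat.choose_eq_zero_of_lt (show n - 1 < k by omega)]
    · field_simp
      simp

theorem wardLah_horizontal_rec_general (n k m : ℕ) (hmn : 1 ≤ n - m) :
    wardLah n k =
      ((Nat.factorial (n + k) : ℚ) / Nat.factorial k) *
        ∑ j ∈ Finset.range (m + 1),
          ((Nat.factorial (k - j) : ℚ) / Nat.factorial (n - m + k - j)) *
            (Nat.choose m j) * wardLah (n - m) (k - j) := by
  have hnm : n - m ≠ 0 := by omega
  have term : ∀ j, ((k - j).factorial : ℚ) / (n - m + k - j).factorial * m.choose j *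
      wardLah (n - m) (k - j) = ((X + 1) ^ m).coeff j * (wardLahRowPoly (n - m)).coeff (k - j) := by
    intro j
    rw [coeff_X_add_one_pow, wardLahRowPoly_coeff hnm]
    rcases le_or_gt j k with hjk | hkj
    · rw [show n - m + k - j = n - m + (k - j) by omega]
      ring
    · -- `k - j` truncates to `0`, where both `W(n - m, 0)` and the constant coefficient vanish
      simp [Nat.sub_eq_zero_of_le hkj.le, wardLah_zero_right hnm]
  have hf : ∀ j, m < j → ((X + 1) ^ m : ℚ[X]).coeff j = 0 := fun j hj => by
    rw [coeff_X_add_one_pow, Nat.choose_eq_zero_of_lt hj, Nat.cast_zero]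
  have hg : (wardLahRowPoly (n - m)).coeff 0 = 0 := coeff_X_mul_zero _
  rw [Finset.sum_congr rfl fun j _ => term j, sum_range_mul_eq_sum_antidiagonal hf hg, ← coeff_mul,
    ← wardLahRowPoly_eq_mul (by omega), wardLahRowPoly_coeff (by omega)]
  field_simp

theorem wardLah_horizontal_rec (n k m : ℕ) (hk : 1 ≤ k) (hkn : k ≤ n)
    (hm : 1 ≤ m) (hmn : 1 ≤ n - m) :
    wardLah n k =
      ((Nat.factorial (n + k) : ℚ) / Nat.factorial k) *
        ∑ j ∈ Finset.range (m + 1),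
          ((Nat.factorial (k - j) : ℚ) / Nat.factorial (n - m + k - j)) *
            (Nat.choose m j) * wardLah (n - m) (k - j) :=
  wardLah_horizontal_rec_general n k m hmn
end

section
/- For integers n ≥ 2 and k ≥ 1 with n ≥ k, the Ward-Lah numbers satisfy the third-order recurrence W(n,k) = 2(2n-1) · W(n-1,k-1) - n(n-2) · W(n-2,k) + (2n-1) · W(n-1,k). -/
/-!
Multiplying by `n` turns the definition into the closed form
`n · W(n,k) = k · (n+k)^{\underline{n}} · C(n,k)`, which holds for all `n, k`: the factor `n`
absorbs the exceptional value `W(0,0) = 1`, and for `n ≥ 1` the right side vanishes exactly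
where `W` does.
From it follow two shift relations, in `n` alone and in `n` and `k` together, again without side
conditions. Through them each lower term of the recurrence is a polynomial multiple of `W(n,k)`,
and the recurrence becomes a polynomial identity in `n` and `k`.
-/

theorem Nat.cast_choose_mul_succ_eq {R : Type*} [Ring R] (n k : ℕ) :
    (n.choose k : R) * (n + 1) = (n + 1).choose k * (n + 1 - k) := by
  rcases le_or_gt k (n + 1) with hk | hk
  · rw [← Nat.cast_add_one, ← Nat.cast_sub hk, ← Nat.cast_mul, ← Nat.cast_mul,
      Nat.choose_mul_succ_eq]
  · rw [Nat.choose_eq_zero_of_lt (by omega), Nat.choose_eq_zero_of_lt hk]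
    simp

theorem natCast_mul_wardLah (n k : ℕ) :
    (n : ℚ) * wardLah n k = k * (n + k).descFactorial n * n.choose k := by
  rcases Nat.eq_zero_or_pos k with rfl | hk
  · by_cases hn : n = 0 <;> simp [wardLah, hn]
  rcases lt_or_ge n k with hnk | hkn
  · rw [wardLah, if_neg hk.ne', if_pos hnk, Nat.choose_eq_zero_of_lt hnk]
    simp
  have hfac : ((n + k).factorial : ℚ) / k.factorial = (n + k).descFactorial n := by
    rw [← Nat.factorial_mul_descFactorial (by omega : n ≤ n + k), Nat.add_sub_cancel_left]
    push_cast
    field_simp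
  have hchoose : (n : ℚ) * (n - 1).choose (k - 1) = n.choose k * k := by
    obtain ⟨a, rfl⟩ : ∃ a, n = a + 1 := ⟨n - 1, by omega⟩
    obtain ⟨b, rfl⟩ : ∃ b, k = b + 1 := ⟨k - 1, by omega⟩
    exact_mod_cast Nat.add_one_mul_choose_eq a b
  rw [wardLah, if_neg hk.ne', if_neg (not_lt.2 hkn), hfac]
  linear_combination (n + k).descFactorial n * hchoose

theorem wardLah_succ_left (n k : ℕ) :
    ((n : ℚ) + 1 - k) * wardLah (n + 1) k = n * (n + k + 1) * wardLah n k := by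
  have h₀ := natCast_mul_wardLah n k
  have h₁ := natCast_mul_wardLah (n + 1) k
  have hc := Nat.cast_choose_mul_succ_eq (R := ℚ) n k
  rw [show n + 1 + k = n + k + 1 by omega, Nat.succ_descFactorial_succ] at h₁
  push_cast at h₀ h₁
  refine mul_left_cancel₀ (by positivity : (n : ℚ) + 1 ≠ 0) ?_
  linear_combination ((n : ℚ) + 1 - k) * h₁ - (n + 1) * (n + k + 1) * h₀
    - k * (n + k + 1) * (n + k).descFactorial n * hc

theorem wardLah_succ_succ_s5 (n k : ℕ) :
    (k : ℚ) * (k + 1) * wardLah (n + 1) (k + 1) = n * (n + k + 1) * (n + k + 2) * wardLah n k := by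
  have h₀ := natCast_mul_wardLah n k
  have h₁ := natCast_mul_wardLah (n + 1) (k + 1)
  have hc : ((n : ℚ) + 1) * n.choose k = (n + 1).choose (k + 1) * (k + 1) := by
    exact_mod_cast Nat.add_one_mul_choose_eq n k
  have hd : ((k : ℚ) + 1) * (n + k + 1).descFactorial n = (n + k + 1) * (n + k).descFactorial n := by
    norm_cast
    rw [← Nat.succ_descFactorial_succ, Nat.descFactorial_succ,
      show n + k + 1 - n = k + 1 by omega]
  rw [show n + 1 + (k + 1) = n + k + 1 + 1 by omega, Nat.succ_descFactorial_succ] at h₁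
  push_cast at h₀ h₁
  refine mul_left_cancel₀ (by positivity : (n : ℚ) + 1 ≠ 0) ?_
  linear_combination (k : ℚ) * (k + 1) * h₁ - (n + 1) * (n + k + 1) * (n + k + 2) * h₀
    + k * (k + 1) * (n + k + 2) * (n + 1).choose (k + 1) * hd
    - k * (n + k + 1) * (n + k + 2) * (n + k).descFactorial n * hc

theorem wardLah_order_three_rec_general (n k : ℕ) (hn : 2 ≤ n) :
    wardLah n k =
      2 * (2 * (n : ℚ) - 1) * wardLah (n - 1) (k - 1) -
        (n : ℚ) * ((n : ℚ) - 2) * wardLah (n - 2) k +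
        (2 * (n : ℚ) - 1) * wardLah (n - 1) k := by
  obtain ⟨m, rfl⟩ : ∃ m, n = m + 2 := ⟨n - 2, by omega⟩
  rcases k with _ | j
  · -- `W(m, 0)` is nonzero only for `m = 0`, where its coefficient `n (n - 2)` vanishes.
    simp +contextual [wardLah]
  have h₁ := wardLah_succ_succ_s5 (m + 1) j
  have h₂ := wardLah_succ_left m (j + 1)
  have h₃ := wardLah_succ_left (m + 1) (j + 1)
  push_cast at h₁ h₂ h₃ ⊢
  refine mul_left_cancel₀ (by positivity : ((m : ℚ) + 1) * (m + j + 2) * (m + j + 3) ≠ 0) ?_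
  linear_combination 2 * (2 * (m : ℚ) + 3) * h₁ - (m + 2) * (m + 1) * (m + j + 3) * h₂
    - ((m + 2) * (m - j) - (2 * m + 3) * (m + j + 2)) * h₃

theorem wardLah_order_three_rec (n k : ℕ) (hn : 2 ≤ n) (hk : 1 ≤ k) (hkn : k ≤ n) :
    wardLah n k =
      2 * (2 * (n : ℚ) - 1) * wardLah (n - 1) (k - 1) -
        (n : ℚ) * ((n : ℚ) - 2) * wardLah (n - 2) k +
        (2 * (n : ℚ) - 1) * wardLah (n - 1) k :=
  wardLah_order_three_rec_general n k hn
end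

section
/- For a fixed positive integer k, the exponential generating function identity ∑_{n≥k} W(n-k, k) · x^n / n! = (1/k!) · x^{2k} / (1-x)^k holds as an identity of formal power series, where W(m,k) = (m+k)!/k! · C(m-1, k-1) for m ≥ k and W(m,k) = 0 for 0 < m < k, W(0,k) = 0. -/
open PowerSeries

/-! Since `(1 - X)⁻ᵏ = ∑ⱼ C(k - 1 + j, k - 1) Xʲ`, the coefficient of `xⁿ` on the right is
`C(n - k - 1, k - 1) / k!` for `n ≥ 2k` and `0` otherwise; dividing `W(n - k, k)` by `n!` gives the same. -/

namespace PowerSeries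

variable {K : Type*} [Field K]

theorem inv_one_sub_X_eq_mk_one : (1 - X : K⟦X⟧)⁻¹ = mk 1 :=
  (PowerSeries.inv_eq_iff_mul_eq_one (by simp)).mpr (mk_one_mul_one_sub_eq_one K)

theorem inv_one_sub_X_pow_eq_mk_choose {k : ℕ} (hk : 0 < k) :
    (1 - X : K⟦X⟧)⁻¹ ^ k = mk fun n => (Nat.choose (k - 1 + n) (k - 1) : K) := by
  rw [inv_one_sub_X_eq_mk_one, ← Nat.sub_one_add_one_eq_of_pos hk, mk_one_pow_eq_mk_choose_add,
    Nat.add_sub_cancel]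

end PowerSeries

theorem wardLah_div_factorial_add {k : ℕ} (hk : k ≠ 0) (m : ℕ) :
    wardLah m k / (m + k).factorial =
      if k ≤ m then (Nat.choose (m - 1) (k - 1) : ℚ) / k.factorial else 0 := by
  have hfact : ((m + k).factorial : ℚ) ≠ 0 := by positivity
  unfold wardLah
  split_ifs <;> first | omega | simp | field_simp

theorem wardLah_egf (k : ℕ) (hk : 1 ≤ k) :
    PowerSeries.mk (fun n => if k ≤ n then wardLah (n - k) k / (Nat.factorial n : ℚ) else 0) =
      PowerSeries.C (R := ℚ) (1 / Nat.factorial k) * (PowerSeries.X : PowerSeries ℚ) ^ (2 * k) *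
        ((1 - PowerSeries.X : PowerSeries ℚ)⁻¹) ^ k := by
  rw [inv_one_sub_X_pow_eq_mk_choose hk]
  ext n
  simp only [coeff_mk, mul_assoc, coeff_C_mul, coeff_X_pow_mul']
  by_cases hkn : k ≤ n
  · obtain ⟨m, rfl⟩ := Nat.exists_eq_add_of_le' hkn
    rw [if_pos hkn, Nat.add_sub_cancel, wardLah_div_factorial_add (by omega)]
    by_cases hkm : k ≤ m
    · rw [if_pos hkm, if_pos (by omega), show k - 1 + (m + k - 2 * k) = m - 1 by omega]
      ring
    · rw [if_neg hkm, if_neg (by omega), mul_zero]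
  · rw [if_neg hkn, if_neg (by omega), mul_zero]
end

section
/- For integers n ≥ k ≥ 1, the identity (n-k+1)^{rising (n-k)} · L(n,k) = C(n,k) · ∑_{j=0}^{k} C(k,j) · T(n-k, j) holds, where L(n,k) = n!/k! · C(n-1,k-1) are the Lah numbers, T(m,j) = (2m)! · C(m-1, j-1) for m ≥ j ≥ 1, T(m,j) = 0 for j > m or j = 0 with m ≥ 1, T(0,0) = 1, and x^{rising n} denotes the rising factorial x(x+1)⋯(x+n-1). -/
/-!
For `m = n - k`, both sides reduce to `(2m)! · C(n, k) · C(n - 1, k - 1)`. On the left this is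
because `(m + 1)^{rising m} = (2m)! / m!` and `n! / (k! m!) = C(n, k)`. On the right, all terms
vanish except those with `1 ≤ j ≤ k`, which sum to `(2m)! · C(n - 1, m)` by Vandermonde's identity.
-/

open Finset

def variedWardLah (n k : ℕ) : ℚ :=
  if k = 0 then (if n = 0 then 1 else 0)
  else if n < k then 0
  else (Nat.factorial (2 * n) : ℚ) * (Nat.choose (n - 1) (k - 1))

lemma variedWardLah_succ_zero (m : ℕ) : variedWardLah (m + 1) 0 = 0 := by
  simp [variedWardLah]

lemma variedWardLah_succ_succ (m j : ℕ) :
    variedWardLah (m + 1) (j + 1) = (2 * (m + 1)).factorial * m.choose j := by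
  simp only [variedWardLah, Nat.add_one_ne_zero, if_false, Nat.add_sub_cancel]
  split_ifs with hmj
  · simp [Nat.choose_eq_zero_of_lt (by omega : m < j)]
  · rfl

lemma sum_range_choose_succ_mul_choose (k s : ℕ) :
    ∑ i ∈ range (k + 1), (k + 1).choose (i + 1) * s.choose i = (k + (s + 1)).choose k := by
  rw [show k + (s + 1) = s + (k + 1) by ring, Nat.add_choose_eq,
    Nat.sum_antidiagonal_eq_sum_range_succ (fun a b => s.choose a * (k + 1).choose b)]
  refine sum_congr rfl fun i hi => ?_
  rw [mul_comm, Nat.choose_symm_of_eq_add (by grind : k + 1 = (k - i) + (i + 1))]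

lemma sum_choose_mul_variedWardLah (k m : ℕ) :
    ∑ j ∈ range (k + 2), ((k + 1).choose j : ℚ) * variedWardLah m j =
      (2 * m).factorial * (k + m).choose k := by
  rcases m with _ | s
  · simp [sum_range_succ', variedWardLah]
  · rw [sum_range_succ', variedWardLah_succ_zero, mul_zero, add_zero]
    simp_rw [variedWardLah_succ_succ, mul_left_comm _ ((2 * (s + 1)).factorial : ℚ), ← mul_sum]
    norm_cast
    rw [sum_range_choose_succ_mul_choose]

lemma ascFactorial_mul_factorial_div_factorial (k m : ℕ) :
    ((m + 1).ascFactorial m : ℚ) * ((k + m).factorial / k.factorial) =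
      (k + m).choose k * (2 * m).factorial := by
  have hasc : (m.factorial * (m + 1).ascFactorial m : ℚ) = (2 * m).factorial := by
    rw [two_mul]; exact_mod_cast Nat.factorial_mul_ascFactorial m m
  have hchoose : ((k + m).choose k * k.factorial * m.factorial : ℚ) = (k + m).factorial := by
    have := Nat.choose_mul_factorial_mul_factorial (Nat.le_add_right k m)
    rw [Nat.add_sub_cancel_left] at this
    exact_mod_cast this
  rw [← hasc, ← hchoose]
  field_simp

theorem lah_variedWardLah_relation (n k : ℕ) (hk : 1 ≤ k) (hkn : k ≤ n) :
    ((Nat.ascFactorial (n - k + 1) (n - k) : ℚ)) *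
        ((Nat.factorial n : ℚ) / Nat.factorial k * (Nat.choose (n - 1) (k - 1))) =
      (Nat.choose n k : ℚ) *
        ∑ j ∈ Finset.range (k + 1), (Nat.choose k j : ℚ) * variedWardLah (n - k) j := by
  obtain ⟨k, rfl⟩ : ∃ k', k = k' + 1 := ⟨k - 1, by omega⟩
  obtain ⟨m, rfl⟩ : ∃ m, n = k + 1 + m := ⟨n - (k + 1), by omega⟩
  rw [Nat.add_sub_cancel_left, Nat.add_sub_cancel, show k + 1 + m - 1 = k + m by omega]
  rw [sum_choose_mul_variedWardLah, ← mul_assoc, ascFactorial_mul_factorial_div_factorial]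
  ring
end

section
/- For integers n ≥ 2 and k ≥ 2 with n ≥ k, the binomial Ward-Lah numbers satisfy the fifth-order recurrence B(n,k) = (-4(n-2)(2n-1)^2/n) · ( B(n-2,k-2) - 2·B(n-2,k-1) + B(n-2,k) ) + (4(2n-1)/(n(2n-3))) · ( (2(n-1)^2 - 1)·B(n-1,k-1) + 2(n-1)^2·B(n-1,k) ). -/
def binomialWardLah (n k : ℕ) : ℚ :=
  if k = 0 then (if n = 0 then 1 else 0)
  else if n < k then 0
  else (Nat.factorial (2 * n) : ℚ) / (Nat.factorial k * Nat.factorial (n - k)) * (Nat.choose (n - 1) (k - 1))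

/-!
For `1 ≤ j ≤ m`, `B(m, j) = (2m)! (m-1)! / (j! (j-1)! ((m-j)!)²)`. Extending `1 / r!` by zero to
negative integers `r`, this closed form holds for every `j` once `m ≥ 1`, and the extended inverse
factorial satisfies `1 / (r-1)! = r / r!` for all integers `r`. Hence each of the six terms of the
recurrence is a polynomial in `n` and `k` times `(2n-4)! (n-3)! / (k! (n-k)!)²`, with no boundary
cases, and the recurrence reduces to a polynomial identity. Only `n = 2`, whose row `n - 2 = 0`
escapes the closed form, is checked by hand.
-/

open scoped Nat

def invFactorial (r : ℤ) : ℚ := if r < 0 then 0 else ((r.toNat)! : ℚ)⁻¹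

lemma invFactorial_natCast (r : ℕ) : invFactorial r = ((r ! : ℕ) : ℚ)⁻¹ := by
  simp [invFactorial]

lemma invFactorial_of_neg {r : ℤ} (h : r < 0) : invFactorial r = 0 := if_pos h

lemma invFactorial_sub_one (r : ℤ) : invFactorial (r - 1) = r * invFactorial r := by
  rcases lt_trichotomy r 0 with h | rfl | h
  · simp [invFactorial_of_neg h, invFactorial_of_neg (by omega : r - 1 < 0)]
  · simp [invFactorial_of_neg]
  · obtain ⟨s, rfl⟩ : ∃ s : ℕ, r = s + 1 := ⟨(r - 1).toNat, by omega⟩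
    rw [add_sub_cancel_right, ← Nat.cast_succ, invFactorial_natCast, invFactorial_natCast,
      Nat.factorial_succ]
    push_cast
    field_simp

lemma binomialWardLah_succ_eq_invFactorial (p j : ℕ) {x y : ℤ} (hx : (j : ℤ) = x)
    (hy : (p : ℤ) + 1 - j = y) :
    binomialWardLah (p + 1) j =
      (2 * (p + 1))! * p ! * (invFactorial x * invFactorial (x - 1) * invFactorial y ^ 2) := by
  subst hx hy
  rcases Nat.eq_zero_or_pos j with rfl | hj
  · simp [binomialWardLah, invFactorial_of_neg]
  rcases lt_or_ge (p + 1) j with hpj | hjp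
  · rw [invFactorial_of_neg (show (p : ℤ) + 1 - j < 0 by omega)]
    simp [binomialWardLah, hj.ne', hpj]
  obtain ⟨i, rfl⟩ : ∃ i, j = i + 1 := ⟨j - 1, by omega⟩
  obtain ⟨d, rfl⟩ : ∃ d, p = i + d := ⟨p - i, by omega⟩
  rw [show ((i + 1 : ℕ) : ℤ) - 1 = i by push_cast; ring,
    show ((i + d : ℕ) : ℤ) + 1 - (i + 1 : ℕ) = d by push_cast; ring]
  simp only [invFactorial_natCast, binomialWardLah, Nat.add_sub_cancel,
    if_neg (Nat.succ_ne_zero i), if_neg (show ¬ i + d + 1 < i + 1 by omega),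
    show i + d + 1 - (i + 1) = d by omega]
  rw [Nat.cast_choose ℚ (show i ≤ i + d by omega), show i + d - i = d by omega]
  field_simp

theorem binomialWardLah_order_five_rec (n k : ℕ) (hn : 2 ≤ n) (hk : 2 ≤ k) (hkn : k ≤ n) :
    binomialWardLah n k =
      (-4 * ((n : ℚ) - 2) * (2 * (n : ℚ) - 1) ^ 2 / n) *
          (binomialWardLah (n - 2) (k - 2) - 2 * binomialWardLah (n - 2) (k - 1) +
            binomialWardLah (n - 2) k) +
        (4 * (2 * (n : ℚ) - 1) / ((n : ℚ) * (2 * (n : ℚ) - 3))) *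
          ((2 * ((n : ℚ) - 1) ^ 2 - 1) * binomialWardLah (n - 1) (k - 1) +
            2 * ((n : ℚ) - 1) ^ 2 * binomialWardLah (n - 1) k) := by
  obtain rfl | ⟨m, rfl⟩ : n = 2 ∨ ∃ m, n = m + 3 := by
    rcases Nat.lt_or_ge n 3 with h | h
    · exact Or.inl (by omega)
    · exact Or.inr ⟨n - 3, by omega⟩
  · obtain rfl : k = 2 := by omega
    norm_num [binomialWardLah, Nat.factorial]
  rw [show m + 3 - 2 = m + 1 by omega, show m + 3 - 1 = m + 2 by omega]
  have e0 := binomialWardLah_succ_eq_invFactorial (m + 2) k (x := k) (y := m + 3 - k)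
    rfl (by omega)
  have e1 := binomialWardLah_succ_eq_invFactorial (m + 1) (k - 1) (x := k - 1) (y := m + 3 - k)
    (by omega) (by omega)
  have e2 := binomialWardLah_succ_eq_invFactorial (m + 1) k (x := k) (y := m + 3 - k - 1)
    rfl (by omega)
  have e3 := binomialWardLah_succ_eq_invFactorial m (k - 2) (x := k - 1 - 1) (y := m + 3 - k)
    (by omega) (by omega)
  have e4 := binomialWardLah_succ_eq_invFactorial m (k - 1) (x := k - 1) (y := m + 3 - k - 1)
    (by omega) (by omega)
  have e5 := binomialWardLah_succ_eq_invFactorial m k (x := k) (y := m + 3 - k - 1 - 1)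
    rfl (by omega)
  simp only [invFactorial_sub_one] at e0 e1 e2 e3 e4 e5
  rw [e0, e1, e2, e3, e4, e5]
  simp only [Nat.mul_succ, Nat.factorial_succ]
  push_cast
  have h2n3 : 2 * ((m : ℚ) + 3) - 3 ≠ 0 := by linarith [(m.cast_nonneg : (0 : ℚ) ≤ m)]
  field_simp
  ring
end
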